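/- arXiv:2503.22455 — 2 statements merged into one kernel-verified Lean document; each statement's English description precedes it below -/
import Mathlib

section
/- For the sixth-order centered second-derivative stencil with coefficients a₁ = 3/2, a₂ = -3/20, a₃ = 1/90, the symbol σ(k) = 2∑_{j=1}^3 a_j(1-cos jk) satisfies σ(k) ≥ 0 for all k and sup_k σ(k) = 272/45. -/
open Real

lemma sigma_eq (k : ℝ) :
    2 * ((3/2) * (1 - Real.cos k) + (-3/20) * (1 - Real.cos (2*k))
      + (1/90) * (1 - Real.cos (3*k)))
    = (1 - Real.cos k) * (4 * Real.cos k ^ 2 - 23 * Real.cos k + 109) / 45 := by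
  rw [Real.cos_two_mul, Real.cos_three_mul]
  ring

/-- For the sixth-order centered second-derivative stencil
(a₁ = 3/2, a₂ = -3/20, a₃ = 1/90), the symbol σ(k) = 2∑aⱼ(1-cos jk) is
nonnegative and has supremum 272/45. -/
theorem sigma_max_sixth_order :
    (∀ k : ℝ, 0 ≤ 2 * ((3/2) * (1 - Real.cos k) + (-3/20) * (1 - Real.cos (2*k))
        + (1/90) * (1 - Real.cos (3*k))))
    ∧ sSup (Set.range fun k : ℝ =>
        2 * ((3/2) * (1 - Real.cos k) + (-3/20) * (1 - Real.cos (2*k))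
          + (1/90) * (1 - Real.cos (3*k)))) = 272/45 := by
  have hub : ∀ k : ℝ, 2 * ((3/2) * (1 - Real.cos k) + (-3/20) * (1 - Real.cos (2*k))
      + (1/90) * (1 - Real.cos (3*k))) ≤ 272/45 := by
    intro k
    rw [sigma_eq]
    have h1 := Real.neg_one_le_cos k
    nlinarith [mul_nonneg (by linarith : (0:ℝ) ≤ Real.cos k + 1)
      (show (0:ℝ) ≤ 4 * Real.cos k ^ 2 - 31 * Real.cos k + 163 by
        nlinarith [sq_nonneg (8 * Real.cos k - 31)])]
  constructor
  · intro k
    rw [sigma_eq]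
    have h1 := Real.cos_le_one k
    nlinarith [sq_nonneg (Real.cos k - 1), sq_nonneg (Real.cos k)]
  · apply le_antisymm
    · exact csSup_le (Set.range_nonempty _) (by rintro x ⟨k, rfl⟩; exact hub k)
    · apply le_csSup ⟨272/45, by rintro x ⟨k, rfl⟩; exact hub k⟩
      refine ⟨Real.pi, ?_⟩
      show 2 * ((3/2) * (1 - Real.cos Real.pi) + (-3/20) * (1 - Real.cos (2*Real.pi))
          + (1/90) * (1 - Real.cos (3*Real.pi))) = 272/45
      have h2 : Real.cos (2 * Real.pi) = 1 := Real.cos_two_pi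
      have h3 : Real.cos (3 * Real.pi) = -1 := by
        have : (3:ℝ) * Real.pi = 2 * Real.pi + Real.pi := by ring
        rw [this, Real.cos_add, Real.cos_two_pi, Real.sin_two_pi, Real.cos_pi]; ring
      rw [Real.cos_pi, h2, h3]; ring
end

section
/- The symbol of the centered stencil of order 2w is positive except at multiples of 2π: if the coefficients a_j are chosen so that the stencil is exact to order 2w (i.e., σ(k) = k² + O(k^{2w+2}) as k → 0) for w ∈ {1,2,3}, then σ(k) > 0 for all k ∈ (0, 2π). -/
open Real

/-- The symbols of the centered second-derivative stencils of orders
2, 4, 6 (w = 1, 2, 3) are strictly positive on (0, 2π). -/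
theorem sigma_positive_on_interval :
    ∀ k ∈ Set.Ioo (0:ℝ) (2*π),
      0 < 2 * (1 * (1 - Real.cos k))
      ∧ 0 < 2 * ((4/3) * (1 - Real.cos k) + (-1/12) * (1 - Real.cos (2*k)))
      ∧ 0 < 2 * ((3/2) * (1 - Real.cos k) + (-3/20) * (1 - Real.cos (2*k))
          + (1/90) * (1 - Real.cos (3*k))) := by
  intro k hk
  obtain ⟨hk0, hk2⟩ := hk
  have hlt : Real.cos k < 1 := by
    rcases lt_or_eq_of_le (Real.cos_le_one k) with h | h
    · exact h
    · exfalso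
      have := (Real.cos_eq_one_iff_of_lt_of_lt (by linarith [Real.pi_pos]) hk2).mp h
      linarith
  have hge : -1 ≤ Real.cos k := Real.neg_one_le_cos k
  rw [Real.cos_two_mul, Real.cos_three_mul]
  refine ⟨by linarith, by nlinarith, by nlinarith [sq_nonneg (2 * Real.cos k + 1), sq_nonneg (Real.cos k)]⟩
end
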